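/- Fix K ≥ 1, rewards 0 ≤ r_1 < r_2 < ... < r_K, capacities c_1^M, ..., c_K^M > 0 with total C^M = Σ_k c_k^M, N ≥ 1, and prices p_1, ..., p_N ≥ 0. Let μ be a probability measure on [0,1]^N. Then the expected cost function c ↦ ∫_{[0,1]^N} cost(ε, c) dμ(ε) is well defined (the integrand is integrable for each c ∈ F_c) and is convex on F_c := {c ∈ ℝ^N : c_i ≥ 0 for all i, Σ_i c_i ≤ C^M}. -/

import Mathlib

/-!
For `ε ∈ [0,1]^N` and feasible `c` the deployed capacity `D = ε ⬝ᵥ c` lies in `[0, C^M]`.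
The cost with type `q` declared critical is affine in `D`, and since rewards increase with
the type, the critical type `k_c` maximises it among all types. Hence
`cost(ε, c) = max_q (affine in ε ⬝ᵥ c) - p ⬝ᵥ c`: convex in `c` and continuous in `ε`.
Continuity on the compact cube, which carries all of `μ`, gives integrability, and
integrating the pointwise convexity inequality gives convexity of the expected cost.
-/

open MeasureTheory

open scoped Classical in
/-- The critical type `k_c(ε, c)`: the least machine type `q` such that the total
deployed capacity `∑ i, ε i * c i` is covered by types `1, …, q`. -/
noncomputable def kcrit {K N : ℕ} (hK : 0 < K) (cM : Fin K → ℝ)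
    (ε c : Fin N → ℝ) : Fin K :=
  let S := (Finset.univ : Finset (Fin K)).filter fun q =>
      (∑ i, ε i * c i) ≤ ∑ k ∈ Finset.univ.filter (fun k => k ≤ q), cM k
  if h : S.Nonempty then S.min' h else ⟨0, hK⟩

/-- The cost of committing profile `c` under deployment rates `ε`:
`∑_{k < k_c} (r k - r k_c) * cM k + ∑ i, c i * (r k_c * ε i - p i)`. -/
noncomputable def acost {K N : ℕ} (hK : 0 < K) (r cM : Fin K → ℝ)
    (p ε c : Fin N → ℝ) : ℝ :=
  (∑ k ∈ Finset.univ.filter (fun k => k < kcrit hK cM ε c),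
      (r k - r (kcrit hK cM ε c)) * cM k)
    + ∑ i, c i * (r (kcrit hK cM ε c) * ε i - p i)

/-- The feasible region `F_c = {c : c i ≥ 0, ∑ i, c i ≤ C^M}`. -/
def feasSet (N : ℕ) (CM : ℝ) : Set (Fin N → ℝ) :=
  {c : Fin N → ℝ | (∀ i, 0 ≤ c i) ∧ ∑ i, c i ≤ CM}

open Finset

theorem ConvexOn.finset_sup' {𝕜 E β ι : Type*} [Semiring 𝕜] [PartialOrder 𝕜]
    [AddCommMonoid E] [AddCommMonoid β] [LinearOrder β] [IsOrderedAddMonoid β] [SMul 𝕜 E]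
    [Module 𝕜 β] [PosSMulStrictMono 𝕜 β] {s : Set E} {t : Finset ι} (ht : t.Nonempty)
    {f : ι → E → β} (hf : ∀ i ∈ t, ConvexOn 𝕜 s (f i)) : ConvexOn 𝕜 s (t.sup' ht f) :=
  Finset.sup'_induction ht f (fun _ hg _ hh => hg.sup hh) hf

theorem convexOn_integral {E α : Type*} [AddCommMonoid E] [Module ℝ E] [MeasurableSpace α]
    {μ : Measure α} {s : Set E} {f : E → α → ℝ} (hs : Convex ℝ s)
    (hf : ∀ᵐ a ∂μ, ConvexOn ℝ s (f · a)) (hint : ∀ x ∈ s, Integrable (f x) μ) :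
    ConvexOn ℝ s fun x => ∫ a, f x a ∂μ := by
  refine ⟨hs, fun x hx y hy a b ha hb hab => ?_⟩
  have hcomb : Integrable (fun ε => a * f x ε + b * f y ε) μ :=
    ((hint x hx).const_mul a).add ((hint y hy).const_mul b)
  calc ∫ ε, f (a • x + b • y) ε ∂μ ≤ ∫ ε, (a * f x ε + b * f y ε) ∂μ :=
        integral_mono_ae (hint _ (hs hx hy ha hb hab)) hcomb
          (hf.mono fun ε hε => hε.2 hx hy ha hb hab)
    _ = a • ∫ ε, f x ε ∂μ + b • ∫ ε, f y ε ∂μ := by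
        rw [integral_add ((hint x hx).const_mul a) ((hint y hy).const_mul b),
          integral_const_mul, integral_const_mul, smul_eq_mul, smul_eq_mul]

theorem ContinuousOn.integrable_of_ae_mem {X : Type*} [TopologicalSpace X] [T2Space X]
    [MeasurableSpace X] [OpensMeasurableSpace X] {μ : Measure X} [IsFiniteMeasureOnCompacts μ]
    {f : X → ℝ} {K : Set X} (hK : IsCompact K) (hf : ContinuousOn f K)
    (hμK : ∀ᵐ x ∂μ, x ∈ K) : Integrable f μ := by
  rw [← Measure.restrict_eq_self_of_ae_mem hμK]
  exact hf.integrableOn_compact hK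

section CriticalType

variable {K : ℕ} (r cM : Fin K → ℝ)

/-- The cost before prices if `q` were the critical type, as a function of the deployed
capacity `D = ε ⬝ᵥ c`. -/
def affineCost (q : Fin K) (D : ℝ) : ℝ :=
  ∑ k ∈ Iio q, (r k - r q) * cM k + r q * D

theorem affineCost_eq_sum_Iic (q : Fin K) (D : ℝ) :
    affineCost r cM q D = ∑ k ∈ Iic q, (r k - r q) * cM k + r q * D := by
  rw [affineCost, ← Iio_insert, sum_insert notMem_Iio_self, sub_self, zero_mul, zero_add]

theorem convexOn_affineCost (q : Fin K) :
    ConvexOn ℝ Set.univ (affineCost r cM q) := by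
  refine ⟨convex_univ, fun x _ y _ a b _ _ hab => le_of_eq ?_⟩
  simp only [affineCost, smul_eq_mul]
  linear_combination (-∑ k ∈ Iio q, (r k - r q) * cM k) * hab

theorem continuous_affineCost (q : Fin K) :
    Continuous (affineCost r cM q) := by
  unfold affineCost; fun_prop

variable {r cM}

theorem affineCost_le_of_lt (hr : Monotone r) (hcM : ∀ k, 0 ≤ cM k) {q q' : Fin K} {D : ℝ}
    (hq : q < q') (hD : ∑ k ∈ Iio q', cM k ≤ D) :
    affineCost r cM q D ≤ affineCost r cM q' D := by
  have hsplit := sum_sdiff (f := fun k => (r k - r q) * cM k) (Iio_subset_Iio hq.le)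
  have hshift : ∑ k ∈ Iio q', (r k - r q') * cM k
      = ∑ k ∈ Iio q', (r k - r q) * cM k - (r q' - r q) * ∑ k ∈ Iio q', cM k := by
    rw [mul_sum, ← sum_sub_distrib]
    exact sum_congr rfl fun k _ => by ring
  have hdiff : affineCost r cM q' D - affineCost r cM q D
      = ∑ k ∈ Iio q' \ Iio q, (r k - r q) * cM k + (r q' - r q) * (D - ∑ k ∈ Iio q', cM k) := by
    unfold affineCost
    linarith
  have hnew : 0 ≤ ∑ k ∈ Iio q' \ Iio q, (r k - r q) * cM k := by
    refine sum_nonneg fun k hk => mul_nonneg (sub_nonneg.2 (hr ?_)) (hcM k)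
    simpa using (mem_sdiff.1 hk).2
  have hslack : 0 ≤ (r q' - r q) * (D - ∑ k ∈ Iio q', cM k) :=
    mul_nonneg (sub_nonneg.2 (hr hq.le)) (sub_nonneg.2 hD)
  linarith

theorem affineCost_le_of_gt (hr : Monotone r) (hcM : ∀ k, 0 ≤ cM k) {q q' : Fin K} {D : ℝ}
    (hq : q' < q) (hD : D ≤ ∑ k ∈ Iic q', cM k) :
    affineCost r cM q D ≤ affineCost r cM q' D := by
  have hsplit := sum_sdiff (f := fun k => (r k - r q) * cM k) (Iic_subset_Iic.2 hq.le)
  have hshift : ∑ k ∈ Iic q', (r k - r q') * cM k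
      = ∑ k ∈ Iic q', (r k - r q) * cM k + (r q - r q') * ∑ k ∈ Iic q', cM k := by
    rw [mul_sum, ← sum_add_distrib]
    exact sum_congr rfl fun k _ => by ring
  have hdiff : affineCost r cM q D - affineCost r cM q' D
      = ∑ k ∈ Iic q \ Iic q', (r k - r q) * cM k + (r q - r q') * (D - ∑ k ∈ Iic q', cM k) := by
    rw [affineCost_eq_sum_Iic, affineCost_eq_sum_Iic]
    linarith
  have hnew : ∑ k ∈ Iic q \ Iic q', (r k - r q) * cM k ≤ 0 := by
    refine sum_nonpos fun k hk => mul_nonpos_of_nonpos_of_nonneg (sub_nonpos.2 (hr ?_)) (hcM k)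
    simpa using (mem_sdiff.1 hk).1
  have hslack : (r q - r q') * (D - ∑ k ∈ Iic q', cM k) ≤ 0 :=
    mul_nonpos_of_nonneg_of_nonpos (sub_nonneg.2 (hr hq.le)) (sub_nonpos.2 hD)
  linarith

end CriticalType

section Kcrit
variable {K N : ℕ} (hK : 0 < K) (cM : Fin K → ℝ) (ε c : Fin N → ℝ)

theorem le_sum_Iic_kcrit (hD : ε ⬝ᵥ c ≤ ∑ k, cM k) :
    ε ⬝ᵥ c ≤ ∑ k ∈ Iic (kcrit hK cM ε c), cM k := by
  have : NeZero K := ⟨hK.ne'⟩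
  have hS : ⊤ ∈ univ.filter fun q => ∑ i, ε i * c i ≤ ∑ k ∈ univ.filter (· ≤ q), cM k := by
    simpa [filter_ge_eq_Iic, dotProduct] using hD
  unfold kcrit
  rw [dif_pos ⟨⊤, hS⟩]
  have := (mem_filter.1 (min'_mem _ ⟨⊤, hS⟩)).2
  rwa [filter_ge_eq_Iic] at this

theorem sum_Iic_lt_of_lt_kcrit {q : Fin K} (hq : q < kcrit hK cM ε c) :
    ∑ k ∈ Iic q, cM k < ε ⬝ᵥ c := by
  unfold kcrit at hq
  dsimp only at hq
  split_ifs at hq with hS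
  · have hqS := mt (min'_le _ q) hq.not_ge
    rw [mem_filter, filter_ge_eq_Iic] at hqS
    simpa [dotProduct] using hqS
  · exact absurd hq (by simp [Fin.lt_def])

theorem sum_Iio_kcrit_le (hD : 0 ≤ ε ⬝ᵥ c) : ∑ k ∈ Iio (kcrit hK cM ε c), cM k ≤ ε ⬝ᵥ c := by
  by_cases hmin : IsMin (kcrit hK cM ε c)
  · simpa [hmin.finsetIio_eq] using hD
  · rw [← Iic_pred_eq_Iio_of_not_isMin hmin]
    exact (sum_Iic_lt_of_lt_kcrit hK cM ε c (Order.pred_lt_of_not_isMin hmin)).le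

end Kcrit

section MaxAffine

variable {K N : ℕ} (hK : 0 < K) (r cM : Fin K → ℝ)

noncomputable def maxAffineCost : ℝ → ℝ :=
  univ.sup' (univ_nonempty_iff.2 ⟨⟨0, hK⟩⟩) (affineCost r cM)

theorem continuous_maxAffineCost : Continuous (maxAffineCost hK r cM) :=
  Continuous.finset_sup' _ fun q _ => continuous_affineCost r cM q

theorem convexOn_maxAffineCost_dotProduct_sub (p ε : Fin N → ℝ) :
    ConvexOn ℝ Set.univ fun c => maxAffineCost hK r cM (ε ⬝ᵥ c) - p ⬝ᵥ c :=
  ((ConvexOn.finset_sup' _ fun q _ => convexOn_affineCost r cM q).comp_linearMap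
    (dotProductBilin ℝ ℝ ε)).sub ((dotProductBilin ℝ ℝ p).concaveOn convex_univ)

theorem acost_eq_affineCost (p ε c : Fin N → ℝ) :
    acost hK r cM p ε c = affineCost r cM (kcrit hK cM ε c) (ε ⬝ᵥ c) - p ⬝ᵥ c := by
  have hlin : ∑ i, c i * (r (kcrit hK cM ε c) * ε i - p i)
      = r (kcrit hK cM ε c) * (ε ⬝ᵥ c) - p ⬝ᵥ c := by
    rw [dotProduct, dotProduct, mul_sum, ← sum_sub_distrib]
    exact sum_congr rfl fun i _ => by ring
  rw [acost, affineCost, filter_gt_eq_Iio, hlin]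
  ring

variable {r cM}

theorem maxAffineCost_eq_affineCost (hr : Monotone r) (hcM : ∀ k, 0 ≤ cM k) {q : Fin K} {D : ℝ}
    (hlo : ∑ k ∈ Iio q, cM k ≤ D) (hhi : D ≤ ∑ k ∈ Iic q, cM k) :
    maxAffineCost hK r cM D = affineCost r cM q D := by
  rw [maxAffineCost, Finset.sup'_apply]
  refine le_antisymm (sup'_le _ _ fun q' _ => ?_) (le_sup' (affineCost r cM · D) (mem_univ q))
  rcases lt_trichotomy q' q with h | rfl | h
  · exact affineCost_le_of_lt hr hcM h hlo
  · exact le_rfl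
  · exact affineCost_le_of_gt hr hcM h hhi

theorem acost_eq_maxAffineCost (hr : Monotone r) (hcM : ∀ k, 0 ≤ cM k) (p : Fin N → ℝ)
    {ε c : Fin N → ℝ} (hD₀ : 0 ≤ ε ⬝ᵥ c) (hD : ε ⬝ᵥ c ≤ ∑ k, cM k) :
    acost hK r cM p ε c = maxAffineCost hK r cM (ε ⬝ᵥ c) - p ⬝ᵥ c := by
  rw [acost_eq_affineCost, maxAffineCost_eq_affineCost hK hr hcM
    (sum_Iio_kcrit_le hK cM ε c hD₀) (le_sum_Iic_kcrit hK cM ε c hD)]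

end MaxAffine

theorem convex_feasSet (N : ℕ) (CM : ℝ) : Convex ℝ (feasSet N CM) :=
  (convex_Ici 0).inter (convex_halfSpace_le ⟨fun _ _ => sum_add_distrib,
    fun _ _ => by simp [mul_sum]⟩ CM)

theorem dotProduct_mem_Icc_of_mem_feasSet {N : ℕ} {CM : ℝ} {ε c : Fin N → ℝ}
    (hε : ε ∈ Set.Icc 0 1) (hc : c ∈ feasSet N CM) : ε ⬝ᵥ c ∈ Set.Icc 0 CM :=
  ⟨sum_nonneg fun i _ => mul_nonneg (hε.1 i) (hc.1 i),
    (sum_le_sum fun i _ => mul_le_of_le_one_left (hc.1 i) (hε.2 i)).trans hc.2⟩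

theorem expected_acost_convexOn_general
    (K N : ℕ) (hK : 0 < K)
    (r cM : Fin K → ℝ) (hr : StrictMono r)
    (hcM : ∀ k, 0 < cM k)
    (p : Fin N → ℝ)
    (μ : Measure (Fin N → ℝ)) [IsProbabilityMeasure μ]
    (hμ : μ {ε : Fin N → ℝ | ∀ i, ε i ∈ Set.Icc (0:ℝ) 1} = 1) :
    (∀ c ∈ feasSet N (∑ k, cM k),
        Integrable (fun ε => acost hK r cM p ε c) μ) ∧
    ConvexOn ℝ (feasSet N (∑ k, cM k))
      (fun c => ∫ ε, acost hK r cM p ε c ∂μ) := by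
  have hcube : {ε : Fin N → ℝ | ∀ i, ε i ∈ Set.Icc (0:ℝ) 1} = Set.Icc 0 1 := by
    ext; simp [Pi.le_def, forall_and]
  have hae : ∀ᵐ ε ∂μ, ε ∈ Set.Icc (0 : Fin N → ℝ) 1 := by
    rw [ae_mem_iff_measure_eq measurableSet_Icc.nullMeasurableSet, ← hcube, hμ, measure_univ]
  have hmax : ∀ ε ∈ Set.Icc (0 : Fin N → ℝ) 1, Set.EqOn (acost hK r cM p ε)
      (fun c => maxAffineCost hK r cM (ε ⬝ᵥ c) - p ⬝ᵥ c) (feasSet N (∑ k, cM k)) :=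
    fun ε hε c hc => have hD := dotProduct_mem_Icc_of_mem_feasSet hε hc
      acost_eq_maxAffineCost hK hr.monotone (fun k => (hcM k).le) p hD.1 hD.2
  have hint : ∀ c ∈ feasSet N (∑ k, cM k), Integrable (fun ε => acost hK r cM p ε c) μ :=
    fun c hc => ((((continuous_maxAffineCost hK r cM).comp (by fun_prop)).sub
      continuous_const).continuousOn.integrable_of_ae_mem isCompact_Icc hae).congr
      (hae.mono fun ε hε => (hmax ε hε hc).symm)
  refine ⟨hint, convexOn_integral (convex_feasSet _ _) (hae.mono fun ε hε => ?_) hint⟩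
  exact ((convexOn_maxAffineCost_dotProduct_sub hK r cM p ε).subset (Set.subset_univ _)
    (convex_feasSet _ _)).congr (hmax ε hε).symm

/-- If the deployment-rate vector `ε` is random with probability
distribution `μ` on `[0,1]^N`, then the expected cost
`c ↦ ∫ ε, cost(ε, c) ∂μ` is well defined (the integrand is integrable for each
feasible `c`) and convex on the feasible region. -/
theorem expected_acost_convexOn
    (K N : ℕ) (hK : 0 < K) (hN : 0 < N)
    (r cM : Fin K → ℝ) (hr0 : 0 ≤ r ⟨0, hK⟩) (hr : StrictMono r)
    (hcM : ∀ k, 0 < cM k)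
    (p : Fin N → ℝ) (hp : ∀ i, 0 ≤ p i)
    (μ : Measure (Fin N → ℝ)) [IsProbabilityMeasure μ]
    (hμ : μ {ε : Fin N → ℝ | ∀ i, ε i ∈ Set.Icc (0:ℝ) 1} = 1) :
    (∀ c ∈ feasSet N (∑ k, cM k),
        Integrable (fun ε => acost hK r cM p ε c) μ) ∧
    ConvexOn ℝ (feasSet N (∑ k, cM k))
      (fun c => ∫ ε, acost hK r cM p ε c ∂μ) :=
  expected_acost_convexOn_general K N hK r cM hr hcM p μ hμ
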